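/- Let μ be a partition of k with length l, let n ≥ k + l, and let t_1, …, t_k be integers with 2 ≤ t_1 ≤ ⋯ ≤ t_k ≤ n. Then the coefficient in ℚ[S(n)] of the canonical permutation σ_μ in the product J_{t_1} J_{t_2} ⋯ J_{t_k} equals 1 if for every 1 ≤ i ≤ l the segment (t_{μ_1+⋯+μ_{i−1}+1}, …, t_{μ_1+⋯+μ_{i−1}+μ_i}) belongs to 𝔈(μ_1+⋯+μ_{i−1}+i; μ_i), and equals 0 otherwise. -/

import Mathlib

/-!
Expanding the product, the coefficient of `σ_μ` in `J_{t_1} ⋯ J_{t_k}` is the sum over `s < t_k`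
of the coefficients of `σ_μ (s, t_k)` in `J_{t_1} ⋯ J_{t_{k-1}}`. A product of `j` transpositions
has at least `n - j` cycles, while `σ_μ` has only `n - k` (cycles are counted as the dimension
of the functions constant on them), so a term survives only if `(s, t_k)` splits a cycle of `σ_μ`.
Every permutation occurring in `J_{t_1} ⋯ J_{t_{k-1}}` fixes the points above `t_{k-1}`, and
`t_k` cannot be a fixed point of `σ_μ`; hence `t_k` is the last point of the last nontrivial
cycle, and the split at `s` produces the canonical permutation of `μ` with its last part `m + 1`
refined into `u, m - u`. Refinements may create parts `0`, so the induction on `k` runs over all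
lists `μ`. It ends in the fact that a segment of `𝔈(a; m + 1)` splits in exactly one way into
segments of `𝔈(a; u)` and `𝔈(a + u + 1; m - u)`.
-/

noncomputable section
open scoped Classical

abbrev GA (n : ℕ) := MonoidAlgebra ℚ (Equiv.Perm (Fin n))

/-- The Jucys–Murphy element `J_{i+1} = (1,i+1) + ⋯ + (i,i+1)` (zero-based index `i`),
so that `JM n 0 = J_1 = 0`. -/
def JM (n : ℕ) (i : Fin n) : GA n :=
  ∑ s ∈ Finset.univ.filter (fun s => s < i), MonoidAlgebra.single (Equiv.swap s i) (1 : ℚ)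

/-- Membership in `𝔈(a;r)`: a weakly increasing sequence `(i_1 ≤ ⋯ ≤ i_r)` (zero-based here)
with `i_p ≥ a + p` for `1 ≤ p ≤ r − 1` and `i_r = a + r`. -/
def Epred (a r : ℕ) (t : Fin r → ℕ) : Prop :=
  Monotone t ∧ (∀ p : Fin r, (p : ℕ) + 1 ≤ r - 1 → a + (p : ℕ) + 1 ≤ t p) ∧
    (∀ p : Fin r, (p : ℕ) + 1 = r → t p = a + r)

/-- The cycle `(o+1, o+2, …, o+m+1)` (1-based), i.e. on zero-based points `o, …, o+m`. -/
def cycleOn (n : ℕ) (hn : 0 < n) (o m : ℕ) : Equiv.Perm (Fin n) :=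
  ((List.range (m + 1)).map (fun j => (⟨(o + j) % n, Nat.mod_lt _ hn⟩ : Fin n))).formPerm

/-- Auxiliary: product of the canonical disjoint cycles on consecutive blocks. -/
def canonicalPermAux (n : ℕ) (hn : 0 < n) : ℕ → List ℕ → Equiv.Perm (Fin n)
  | _, [] => 1
  | o, m :: rest => cycleOn n hn o m * canonicalPermAux n hn (o + m + 1) rest

/-- The canonical permutation `σ_μ` of reduced cycle type `μ`: the product of disjoint
cycles of lengths `μ_1+1, μ_2+1, …` on consecutive blocks of points. -/
def canonicalPerm (n : ℕ) (hn : 0 < n) (mu : List ℕ) : Equiv.Perm (Fin n) :=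
  canonicalPermAux n hn 0 mu

theorem Equiv.Perm.not_sameCycle_of_mapsTo {α : Type*} [Finite α] {σ : Equiv.Perm α} {S : Set α}
    (hS : Set.MapsTo σ S S) {x y : α} (hx : x ∈ S) (hy : y ∉ S) : ¬σ.SameCycle x y := fun h => by
  obtain ⟨i, rfl⟩ := h.exists_nat_pow_eq
  exact hy (by simpa [← Equiv.Perm.iterate_eq_pow] using hS.iterate i hx)

section InvariantFunctions

variable {α : Type*}

def invariantFunctions (g : Equiv.Perm α) : Submodule ℚ (α → ℚ) where
  carrier := {v | ∀ x, v (g x) = v x}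
  add_mem' hv hw x := by simp [hv x, hw x]
  zero_mem' _ := rfl
  smul_mem' c v hv x := by simp [hv x]

theorem mem_invariantFunctions {g : Equiv.Perm α} {v : α → ℚ} :
    v ∈ invariantFunctions g ↔ ∀ x, v (g x) = v x := Iff.rfl

theorem finrank_invariantFunctions_one [Fintype α] :
    Module.finrank ℚ (invariantFunctions (1 : Equiv.Perm α)) = Fintype.card α := by
  have : invariantFunctions (1 : Equiv.Perm α) = ⊤ := by ext v; simp [mem_invariantFunctions]
  rw [this, finrank_top, Module.finrank_fintype_fun_eq_card]

variable [Fintype α] [DecidableEq α]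

theorem finrank_invariantFunctions_le_mul_swap (g : Equiv.Perm α) (a b : α) :
    Module.finrank ℚ (invariantFunctions g) ≤
      Module.finrank ℚ (invariantFunctions (g * Equiv.swap a b)) + 1 := by
  let f : invariantFunctions g →ₗ[ℚ] ℚ :=
    (LinearMap.proj (R := ℚ) (φ := fun _ : α => ℚ) a - LinearMap.proj b).comp
      (invariantFunctions g).subtype
  have hker : (LinearMap.ker f).map (invariantFunctions g).subtype ≤
      invariantFunctions (g * Equiv.swap a b) := by
    rintro _ ⟨v, hv, rfl⟩ x
    have hab : v.1 a = v.1 b := sub_eq_zero.mp (LinearMap.mem_ker.mp hv)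
    have hg := v.2
    rw [mem_invariantFunctions] at hg
    simp only [Submodule.coe_subtype, Equiv.Perm.coe_mul, Function.comp_apply,
      Equiv.swap_apply_def]
    split_ifs with hxa hxb
    · rw [hg, hxa, hab]
    · rw [hg, hxb, hab]
    · rw [hg]
  have hrange : Module.finrank ℚ (LinearMap.range f) ≤ 1 :=
    (Submodule.finrank_le _).trans (Module.finrank_self ℚ).le
  have := Submodule.finrank_mono hker
  rw [Submodule.finrank_map_subtype_eq] at this
  have := LinearMap.finrank_range_add_finrank_ker f
  omega

theorem finrank_invariantFunctions_mul_swap_lt {σ : Equiv.Perm α} {s b : α}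
    (hnc : ¬σ.SameCycle s b) :
    Module.finrank ℚ (invariantFunctions (σ * Equiv.swap s b)) <
      Module.finrank ℚ (invariantFunctions σ) := by
  have hle : invariantFunctions (σ * Equiv.swap s b) ≤ invariantFunctions σ := by
    intro v hv
    rw [mem_invariantFunctions] at hv ⊢
    have hvx : ∀ x, x ≠ s → x ≠ b → v (σ x) = v x := fun x hxs hxb => by
      simpa [Equiv.swap_apply_of_ne_of_ne hxs hxb] using hv x
    have hvs : v (σ s) = v b := by simpa using hv b
    have hvb : v (σ b) = v s := by simpa using hv s
    -- `v (σ x) - v x` sums to zero over the `σ`-cycle of `s`, and vanishes there except at `s`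
    have hsum : ∑ x, (v (σ.cycleOf s x) - v x) = v b - v s := by
      rw [Finset.sum_eq_single s]
      · simp [hvs]
      · intro x _ hxs
        rw [Equiv.Perm.cycleOf_apply]
        split_ifs with hx
        · rw [hvx x hxs (fun h => hnc (h ▸ hx)), sub_self]
        · rw [sub_self]
      · simp
    have hzero : ∑ x, (v (σ.cycleOf s x) - v x) = 0 := by
      rw [Finset.sum_sub_distrib, Equiv.sum_comp (σ.cycleOf s) v, sub_self]
    intro x
    by_cases hxs : x = s
    · subst hxs; linarith
    by_cases hxb : x = b
    · subst hxb; linarith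
    exact hvx x hxs hxb
  let w : α → ℚ := fun x => if σ.SameCycle s x then 1 else 0
  have hw : w ∈ invariantFunctions σ := fun x => by simp [w, Equiv.Perm.sameCycle_apply_right]
  have hw' : w ∉ invariantFunctions (σ * Equiv.swap s b) := fun h => by
    simpa [w, hnc, Equiv.Perm.SameCycle.refl] using h b
  exact Submodule.finrank_lt_finrank_of_lt (lt_of_le_of_ne hle fun h => hw' (h ▸ hw))

end InvariantFunctions

section JucysMurphyProducts

variable {n : ℕ}

def jmProd (n : ℕ) (i : ℕ → Fin n) (k : ℕ) : GA n :=
  ((List.range k).map fun p => JM n (i p)).prod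

theorem jmProd_zero (i : ℕ → Fin n) : jmProd n i 0 = 1 := rfl

theorem jmProd_succ (i : ℕ → Fin n) (k : ℕ) : jmProd n i (k + 1) = jmProd n i k * JM n (i k) := by
  simp [jmProd, List.range_succ]

theorem coeff_mul_JM (Q : GA n) (i : Fin n) (σ : Equiv.Perm (Fin n)) :
    (Q * JM n i).coeff σ = ∑ s ∈ Finset.univ.filter (· < i), Q.coeff (σ * Equiv.swap s i) := by
  simp [JM, Finset.mul_sum, MonoidAlgebra.coeff_sum, MonoidAlgebra.coeff_mul_single_apply]

theorem eq_one_of_coeff_one_ne_zero {G : Type*} [Monoid G] {g : G}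
    (h : (1 : MonoidAlgebra ℚ G).coeff g ≠ 0) : g = 1 := by
  by_contra hg
  exact h (by simp [MonoidAlgebra.one_def, Ne.symm hg])

theorem apply_eq_self_of_coeff_jmProd_ne_zero {i : ℕ → Fin n} {k : ℕ} {g : Equiv.Perm (Fin n)}
    (h : (jmProd n i k).coeff g ≠ 0) {x : Fin n} (hx : ∀ p < k, i p < x) : g x = x := by
  induction k generalizing g with
  | zero => rw [eq_one_of_coeff_one_ne_zero h]; rfl
  | succ k ih =>
    rw [jmProd_succ, coeff_mul_JM] at h
    obtain ⟨s, hs, hterm⟩ := Finset.exists_ne_zero_of_sum_ne_zero h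
    have hsk : s < i k := (Finset.mem_filter.mp hs).2
    have hxk := hx k k.lt_succ_self
    have := ih hterm fun p hp => hx p (hp.trans k.lt_succ_self)
    rwa [Equiv.Perm.mul_apply, Equiv.swap_apply_of_ne_of_ne (hsk.trans hxk).ne' hxk.ne'] at this

theorem card_le_finrank_add_of_coeff_jmProd_ne_zero {i : ℕ → Fin n} {k : ℕ}
    {g : Equiv.Perm (Fin n)} (h : (jmProd n i k).coeff g ≠ 0) :
    n ≤ Module.finrank ℚ (invariantFunctions g) + k := by
  induction k generalizing g with
  | zero =>
    rw [eq_one_of_coeff_one_ne_zero h, finrank_invariantFunctions_one, Fintype.card_fin]; rfl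
  | succ k ih =>
    rw [jmProd_succ, coeff_mul_JM] at h
    obtain ⟨s, -, hterm⟩ := Finset.exists_ne_zero_of_sum_ne_zero h
    have := finrank_invariantFunctions_le_mul_swap (g * Equiv.swap s (i k)) s (i k)
    rw [mul_assoc, Equiv.swap_mul_self, mul_one] at this
    have := ih hterm
    omega

theorem coeff_jmProd_mul_swap_eq_zero {i : ℕ → Fin n} {k : ℕ} {σ : Equiv.Perm (Fin n)}
    (hσ : Module.finrank ℚ (invariantFunctions σ) + k + 1 ≤ n) {s b : Fin n}
    (hnc : ¬σ.SameCycle s b) : (jmProd n i k).coeff (σ * Equiv.swap s b) = 0 := by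
  by_contra h
  have := card_le_finrank_add_of_coeff_jmProd_ne_zero h
  have := finrank_invariantFunctions_mul_swap_lt hnc
  omega

end JucysMurphyProducts

section CanonicalPerm

variable {n : ℕ} (hn : 0 < n)

theorem cycleOn_zero (o : ℕ) : cycleOn n hn o 0 = 1 := List.formPerm_singleton _

theorem cycleOn_succ (o m : ℕ) :
    cycleOn n hn o (m + 1) =
      Equiv.swap ⟨(o + 0) % n, Nat.mod_lt _ hn⟩ ⟨(o + 1 + 0) % n, Nat.mod_lt _ hn⟩ *
        cycleOn n hn (o + 1) m := by
  have hshift : ∀ j, (⟨(o + (j + 1)) % n, Nat.mod_lt _ hn⟩ : Fin n) =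
      ⟨(o + 1 + j) % n, Nat.mod_lt _ hn⟩ := fun j => by congr 2; omega
  simp only [cycleOn, List.range_succ_eq_map (n := m + 1), List.range_succ_eq_map (n := m),
    List.map_cons, List.map_map, Function.comp_def, Nat.succ_eq_add_one, hshift]
  exact List.formPerm_cons_cons _ _ _

theorem cycleOn_val {o m : ℕ} (h : o + m < n) (x : Fin n) :
    (cycleOn n hn o m x : ℕ) =
      if (x : ℕ) < o ∨ o + m < x then (x : ℕ) else if (x : ℕ) = o + m then o else (x : ℕ) + 1 := by
  induction m generalizing o with
  | zero => simp only [cycleOn_zero, Equiv.Perm.one_apply]; split_ifs <;> omega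
  | succ m ih =>
    have hy := ih (o := o + 1) (by omega)
    have ho : (o + 0) % n = o := Nat.mod_eq_of_lt (by omega)
    have ho' : (o + 1 + 0) % n = o + 1 := Nat.mod_eq_of_lt (by omega)
    rw [cycleOn_succ, Equiv.Perm.mul_apply, Equiv.swap_apply_def]
    split_ifs at hy ⊢ <;> simp only [Fin.ext_iff, ho, ho'] at * <;> omega

theorem cycleOn_mul_swap {o m u : ℕ} (h : o + m + 1 < n) (hu : u ≤ m) {s M : Fin n}
    (hs : (s : ℕ) = o + u) (hM : (M : ℕ) = o + m + 1) :
    cycleOn n hn o (m + 1) * Equiv.swap s M =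
      cycleOn n hn o u * cycleOn n hn (o + u + 1) (m - u) := by
  ext x
  rw [Equiv.Perm.mul_apply, Equiv.Perm.mul_apply, cycleOn_val hn (by omega),
    cycleOn_val hn (by omega), cycleOn_val hn (by omega), Equiv.swap_apply_def]
  split_ifs <;> simp only [Fin.ext_iff] at * <;> omega

theorem canonicalPermAux_append (o : ℕ) (P Q : List ℕ) :
    canonicalPermAux n hn o (P ++ Q) =
      canonicalPermAux n hn o P * canonicalPermAux n hn (o + P.sum + P.length) Q := by
  induction P generalizing o with
  | nil => simp [canonicalPermAux]
  | cons m P ih =>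
    simp only [List.cons_append, canonicalPermAux, ih, mul_assoc, List.sum_cons, List.length_cons]
    congr 3
    omega

theorem canonicalPerm_append_singleton (P : List ℕ) (m : ℕ) :
    canonicalPerm n hn (P ++ [m]) = canonicalPerm n hn P * cycleOn n hn (P.sum + P.length) m := by
  simp [canonicalPerm, canonicalPermAux_append, canonicalPermAux]

theorem canonicalPerm_append_zero (P : List ℕ) :
    canonicalPerm n hn (P ++ [0]) = canonicalPerm n hn P := by
  rw [canonicalPerm_append_singleton, cycleOn_zero, mul_one]

theorem canonicalPerm_append_mul_swap {P : List ℕ} {m u : ℕ}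
    (h : P.sum + P.length + m + 1 < n) (hu : u ≤ m) {s M : Fin n}
    (hs : (s : ℕ) = P.sum + P.length + u) (hM : (M : ℕ) = P.sum + P.length + m + 1) :
    canonicalPerm n hn (P ++ [m + 1]) * Equiv.swap s M = canonicalPerm n hn (P ++ [u, m - u]) := by
  rw [canonicalPerm_append_singleton, mul_assoc, cycleOn_mul_swap hn h hu hs hM]
  simp [canonicalPerm, canonicalPermAux_append, canonicalPermAux]

theorem canonicalPerm_apply_of_le {P : List ℕ} (hP : P.sum + P.length ≤ n) {x : Fin n}
    (hx : P.sum + P.length ≤ x) : canonicalPerm n hn P x = x := by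
  induction P using List.reverseRecOn with
  | nil => rfl
  | append_singleton P m ih =>
    simp only [List.sum_append, List.length_append, List.sum_singleton,
      List.length_singleton] at hP hx
    have hcyc : (cycleOn n hn (P.sum + P.length) m x : ℕ) = x := by
      rw [cycleOn_val hn (by omega)]; split_ifs <;> omega
    rw [canonicalPerm_append_singleton, Equiv.Perm.mul_apply, Fin.ext hcyc,
      ih (by omega) (by omega)]

theorem canonicalPerm_append_singleton_apply_last {P : List ℕ} {m : ℕ}
    (h : P.sum + P.length + m < n) {x : Fin n} (hx : (x : ℕ) = P.sum + P.length + m) :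
    (canonicalPerm n hn (P ++ [m]) x : ℕ) = P.sum + P.length := by
  obtain ⟨a, ha⟩ : ∃ a : Fin n, (a : ℕ) = P.sum + P.length := ⟨⟨_, by omega⟩, rfl⟩
  have hcyc : cycleOn n hn (P.sum + P.length) m x = a :=
    Fin.ext (by rw [cycleOn_val hn h, ha]; split_ifs <;> omega)
  rw [canonicalPerm_append_singleton, Equiv.Perm.mul_apply, hcyc,
    canonicalPerm_apply_of_le hn (by omega) ha.ge, ha]

theorem canonicalPerm_append_singleton_mapsTo {P : List ℕ} {m : ℕ}
    (h : P.sum + P.length + m < n) :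
    Set.MapsTo (canonicalPerm n hn (P ++ [m])) {x | (x : ℕ) < P.sum + P.length}
      {x | (x : ℕ) < P.sum + P.length} := by
  intro x (hx : (x : ℕ) < _)
  have hcyc : cycleOn n hn (P.sum + P.length) m x = x :=
    Fin.ext (by rw [cycleOn_val hn h]; split_ifs <;> omega)
  rw [canonicalPerm_append_singleton, Equiv.Perm.mul_apply, hcyc]
  by_contra hle
  replace hle : P.sum + P.length ≤ (canonicalPerm n hn P x : ℕ) := not_lt.1 hle
  have := canonicalPerm_apply_of_le hn (by omega) hle
  exact hx.not_ge (EquivLike.injective _ this ▸ hle)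

theorem finrank_invariantFunctions_canonicalPerm_add_sum_le {mu : List ℕ}
    (hmu : mu.sum + mu.length ≤ n) :
    Module.finrank ℚ (invariantFunctions (canonicalPerm n hn mu)) + mu.sum ≤ n := by
  induction mu using List.reverseRecOn with
  | nil =>
    change Module.finrank ℚ (invariantFunctions 1) + 0 ≤ n
    simp [finrank_invariantFunctions_one]
  | append_singleton P m ih =>
    simp only [List.sum_append, List.length_append, List.sum_singleton,
      List.length_singleton] at hmu ih ⊢
    induction m with
    | zero => rw [canonicalPerm_append_zero]; exact ih (by omega)
    | succ m ihm =>
      -- `σ_{P ++ [m+1]}` is `σ_{P ++ [m]}` with its fixed point `M` joined to the cycle of `s`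
      obtain ⟨s, hs⟩ : ∃ s : Fin n, (s : ℕ) = P.sum + P.length + m := ⟨⟨_, by omega⟩, rfl⟩
      obtain ⟨M, hM⟩ : ∃ M : Fin n, (M : ℕ) = P.sum + P.length + m + 1 := ⟨⟨_, by omega⟩, rfl⟩
      have hjoin : canonicalPerm n hn (P ++ [m]) * Equiv.swap s M =
          canonicalPerm n hn (P ++ [m + 1]) := by
        rw [← canonicalPerm_append_zero hn (P ++ [m]), List.append_assoc, List.singleton_append,
          ← Nat.sub_self m, ← canonicalPerm_append_mul_swap hn (by omega) le_rfl hs hM,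
          mul_assoc, Equiv.swap_mul_self, mul_one]
      have hfix : canonicalPerm n hn (P ++ [m]) M = M :=
        canonicalPerm_apply_of_le hn (by simp; omega) (by simp; omega)
      have hlt := finrank_invariantFunctions_mul_swap_lt
        (fun h : (canonicalPerm n hn (P ++ [m])).SameCycle s M => by
          have := congrArg Fin.val (h.eq_of_right hfix); omega)
      rw [hjoin] at hlt
      have := ihm (by omega)
      omega

end CanonicalPerm

section Segments

variable {t : ℕ → ℕ} {k : ℕ}

def SegmentCond (mu : List ℕ) (t : ℕ → ℕ) : Prop :=
  ∀ i : Fin mu.length, Epred ((mu.take i).sum + i + 1) (mu.get i)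
    (fun q : Fin (mu.get i) => t ((mu.take i).sum + q))

theorem segmentCond_nil : SegmentCond [] t := fun i => i.elim0

theorem segmentCond_append_singleton {P : List ℕ} {m : ℕ} :
    SegmentCond (P ++ [m]) t ↔
      SegmentCond P t ∧ Epred (P.sum + P.length + 1) m (fun q : Fin m => t (P.sum + q)) := by
  constructor
  · intro h
    refine ⟨fun i => ?_, ?_⟩
    · have := h ⟨i, by simp⟩
      simp only [List.get_eq_getElem] at this ⊢
      rwa [List.take_append_of_le_length i.2.le, List.getElem_append_left i.2] at this
    · have := h ⟨P.length, by simp⟩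
      simp only [List.get_eq_getElem] at this
      rwa [List.take_append_of_le_length le_rfl, List.take_length,
        List.getElem_concat_length rfl] at this
  · rintro ⟨hP, hm⟩ ⟨i, hi⟩
    simp only [List.get_eq_getElem]
    rcases (Nat.lt_succ_iff_lt_or_eq.mp (by simpa using hi)) with hi | rfl
    · rw [List.take_append_of_le_length hi.le, List.getElem_append_left hi]
      exact hP ⟨i, hi⟩
    · rwa [List.take_append_of_le_length le_rfl, List.take_length,
        List.getElem_concat_length rfl]

theorem epred_zero (a : ℕ) (w : Fin 0 → ℕ) : Epred a 0 w :=
  ⟨fun p => p.elim0, fun p => p.elim0, fun p => p.elim0⟩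

theorem epred_iff (ht : MonotoneOn t (Set.Iio k)) {a r S : ℕ} (hr : S + r ≤ k) :
    Epred a r (fun q : Fin r => t (S + q)) ↔
      (∀ p < r, a + p + 1 ≤ t (S + p)) ∧ (0 < r → t (S + (r - 1)) ≤ a + r) := by
  constructor
  · rintro ⟨-, hlow, hlast⟩
    have hlast' : 0 < r → t (S + (r - 1)) = a + r := fun hr0 =>
      hlast ⟨r - 1, by omega⟩ (by simp; omega)
    refine ⟨fun p hp => ?_, fun hr0 => (hlast' hr0).le⟩
    by_cases hp' : p + 1 ≤ r - 1
    · exact hlow ⟨p, hp⟩ hp'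
    · have := hlast' (by omega)
      rw [show p = r - 1 by omega]
      omega
  · rintro ⟨hlow, hlast⟩
    refine ⟨fun p q hpq => ht (by simp; omega) (by simp; omega) (by simpa using hpq),
      fun p _ => hlow p p.2, fun p hp => ?_⟩
    have := hlow p p.2
    have := hlast (by omega)
    simp only [show (p : ℕ) = r - 1 by omega] at *
    omega

def SplitsAt (t : ℕ → ℕ) (a S m u : ℕ) : Prop :=
  Epred a u (fun q : Fin u => t (S + q)) ∧
    Epred (a + u + 1) (m - u) (fun q : Fin (m - u) => t (S + u + q))

/-- The split point is one past the last `p < m` with `t (S + p) = a + p + 1`. -/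
theorem epred_succ_iff_exists_splitsAt (ht : MonotoneOn t (Set.Iio k)) {a m S : ℕ}
    (hk : S + m < k) (hlast : t (S + m) = a + m + 1) :
    Epred a (m + 1) (fun q : Fin (m + 1) => t (S + q)) ↔ ∃ u ≤ m, SplitsAt t a S m u := by
  rw [epred_iff ht (by omega)]
  constructor
  · rintro ⟨hlow, -⟩
    let u := Nat.findGreatest (fun u => 0 < u → t (S + (u - 1)) ≤ a + u) m
    have hu : u ≤ m := Nat.findGreatest_le m
    have hgreat (v : ℕ) (huv : u < v) (hv : v ≤ m) : a + v < t (S + (v - 1)) := by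
      have := Nat.findGreatest_is_greatest huv hv
      push Not at this
      exact this.2
    refine ⟨u, hu, (epred_iff ht (by omega)).2 ⟨fun p _ => hlow p (by omega), ?_⟩,
      (epred_iff ht (by omega)).2 ⟨fun p hp => ?_, fun _ => ?_⟩⟩
    · exact Nat.findGreatest_spec (P := fun u => 0 < u → t (S + (u - 1)) ≤ a + u)
        (Nat.zero_le m) (absurd · (lt_irrefl 0))
    · have := hgreat (u + p + 1) (by omega) (by omega)
      rw [show S + (u + p + 1 - 1) = S + u + p by omega] at this
      omega
    · have := ht (by simp; omega) (by simp; omega) (show S + u + (m - u - 1) ≤ S + m by omega)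
      omega
  · rintro ⟨u, hu, h1, h2⟩
    rw [epred_iff ht (by omega)] at h1 h2
    refine ⟨fun p hp => ?_, fun _ => by simp [hlast]⟩
    rcases lt_or_ge p u with hpu | hpu
    · exact h1.1 p hpu
    rcases lt_or_ge p m with hpm | hpm
    · have := h2.1 (p - u) (by omega)
      rw [show S + u + (p - u) = S + p by omega] at this
      omega
    · rw [show p = m by omega, hlast]

theorem splitsAt_unique (ht : MonotoneOn t (Set.Iio k)) {a m S : ℕ} (hk : S + m < k)
    {u v : ℕ} (hu : u ≤ m) (hv : v ≤ m) (hsu : SplitsAt t a S m u) (hsv : SplitsAt t a S m v) :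
    u = v := by
  have key {u v : ℕ} (huv : u < v) (hv : v ≤ m) (hsu : SplitsAt t a S m u)
      (hsv : SplitsAt t a S m v) : False := by
    have h1 := ((epred_iff ht (by omega)).1 hsu.2).1 (v - 1 - u) (by omega)
    have h2 := ((epred_iff ht (by omega)).1 hsv.1).2 (by omega)
    rw [show S + u + (v - 1 - u) = S + (v - 1) by omega] at h1
    omega
  rcases lt_trichotomy u v with huv | huv | huv
  · exact (key huv hv hsu hsv).elim
  · exact huv
  · exact (key huv hu hsv hsu).elim

theorem segmentCond_append_pair {P : List ℕ} {m u : ℕ} :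
    SegmentCond (P ++ [u, m - u]) t ↔
      SegmentCond P t ∧ SplitsAt t (P.sum + P.length + 1) P.sum m u := by
  rw [show P ++ [u, m - u] = P ++ [u] ++ [m - u] by simp, segmentCond_append_singleton,
    segmentCond_append_singleton, and_assoc, SplitsAt]
  simp only [List.sum_append, List.sum_singleton, List.length_append, List.length_singleton]
  rw [show P.sum + u + (P.length + 1) + 1 = P.sum + P.length + 1 + u + 1 by omega]

theorem segmentCond_append_succ_last {P : List ℕ} {m : ℕ} (h : SegmentCond (P ++ [m + 1]) t) :
    t (P.sum + m) = P.sum + P.length + m + 2 := by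
  have := (segmentCond_append_singleton.1 h).2.2.2 ⟨m, by omega⟩ rfl
  simp only at this
  omega

theorem segmentCond_append_succ_iff (ht : MonotoneOn t (Set.Iio k)) {P : List ℕ} {m : ℕ}
    (hk : P.sum + m < k) (hlast : t (P.sum + m) = P.sum + P.length + m + 2) :
    SegmentCond (P ++ [m + 1]) t ↔
      SegmentCond P t ∧ ∃ u ≤ m, SplitsAt t (P.sum + P.length + 1) P.sum m u := by
  rw [segmentCond_append_singleton, epred_succ_iff_exists_splitsAt ht hk (by omega)]

end Segments

theorem sum_filter_lt_eq_ite_exists {n A m : ℕ} {M : Fin n} (hM : (M : ℕ) = A + m + 1)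
    {f : Fin n → ℚ} {p : ℕ → Prop} (hp : ∀ u v, u ≤ m → v ≤ m → p u → p v → u = v)
    (hlow : ∀ s : Fin n, (s : ℕ) < A → f s = 0)
    (hhigh : ∀ s : Fin n, A ≤ (s : ℕ) → s < M → f s = if p (s - A) then 1 else 0) :
    ∑ s ∈ Finset.univ.filter (· < M), f s = if ∃ u ≤ m, p u then 1 else 0 := by
  have hf (s : Fin n) (hs : s ∈ Finset.univ.filter (· < M)) :
      f s = if A ≤ (s : ℕ) ∧ p (s - A) then 1 else 0 := by
    have hsM := (Finset.mem_filter.1 hs).2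
    rcases lt_or_ge (s : ℕ) A with hsA | hsA
    · rw [hlow s hsA, if_neg (by omega)]
    · rw [hhigh s hsA hsM]
      exact if_congr (and_iff_right hsA).symm rfl rfl
  rw [Finset.sum_congr rfl hf]
  by_cases h : ∃ u ≤ m, p u
  · obtain ⟨u, hu, hpu⟩ := h
    obtain ⟨s, hs⟩ : ∃ s : Fin n, (s : ℕ) = A + u := ⟨⟨A + u, by omega⟩, rfl⟩
    rw [Finset.sum_eq_single_of_mem s (Finset.mem_filter.2 ⟨Finset.mem_univ _, by
        rw [Fin.lt_def]; omega⟩), if_pos ⟨by omega, by rwa [show (s : ℕ) - A = u by omega]⟩,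
      if_pos ⟨u, hu, hpu⟩]
    intro b hb hbs
    refine if_neg fun ⟨hAb, hpb⟩ => hbs (Fin.ext ?_)
    have hbM := Fin.lt_def.1 (Finset.mem_filter.1 hb).2
    have := hp _ _ (by omega) hu hpb hpu
    omega
  · rw [if_neg h]
    refine Finset.sum_eq_zero fun b hb => if_neg fun ⟨_, hpb⟩ => h ⟨b - A, ?_, hpb⟩
    have := Fin.lt_def.1 (Finset.mem_filter.1 hb).2
    omega

section Coefficient

variable {n : ℕ} (hn : 0 < n)

theorem coeff_jmProd_canonicalPerm_mul_swap_eq_zero {i : ℕ → Fin n} {mu : List ℕ} {K : ℕ}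
    (hK : K + 1 = mu.sum) (hmu : mu.sum + mu.length ≤ n) {s b : Fin n}
    (hnc : ¬(canonicalPerm n hn mu).SameCycle s b) :
    (jmProd n i K).coeff (canonicalPerm n hn mu * Equiv.swap s b) = 0 := by
  have := finrank_invariantFunctions_canonicalPerm_add_sum_le hn hmu
  exact coeff_jmProd_mul_swap_eq_zero (by omega) hnc

theorem coeff_jmProd_canonicalPerm_mul_swap_eq_zero_of_lt {i : ℕ → Fin n} {K : ℕ} {P : List ℕ}
    {m : ℕ} (h : P.sum + P.length + m + 1 < n) {b : Fin n} (hi : ∀ p < K, i p ≤ b)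
    (hb : (b : ℕ) < P.sum + P.length + m + 1) {s : Fin n} (hs : s < b) :
    (jmProd n i K).coeff (canonicalPerm n hn (P ++ [m + 1]) * Equiv.swap s b) = 0 := by
  -- every permutation in the product fixes `M`, which `σ_{P ++ [m+1]} * (s b)` moves
  by_contra hne
  obtain ⟨M, hM⟩ : ∃ M : Fin n, (M : ℕ) = P.sum + P.length + m + 1 := ⟨⟨_, h⟩, rfl⟩
  have hfix := apply_eq_self_of_coeff_jmProd_ne_zero hne (x := M) fun p hp =>
    (hi p hp).trans_lt (by rw [Fin.lt_def]; omega)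
  rw [Fin.lt_def] at hs
  rw [Equiv.Perm.mul_apply, Equiv.swap_apply_of_ne_of_ne (fun h => by rw [h] at hM; omega)
    (fun h => by rw [h] at hM; omega)] at hfix
  have := canonicalPerm_append_singleton_apply_last hn (P := P) (m := m + 1) h hM
  rw [hfix] at this
  omega

def jmIndex (t : ℕ → ℕ) (p : ℕ) : Fin n := ⟨(t p - 1) % n, Nat.mod_lt _ hn⟩

variable {t : ℕ → ℕ} {k : ℕ}

theorem jmIndex_val {p : ℕ} (h : t p ≤ n) : (jmIndex hn t p : ℕ) = t p - 1 :=
  Nat.mod_eq_of_lt (by omega)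

theorem coeff_jmProd_canonicalPerm_append_succ (ht : ∀ p < k, t p ≤ n)
    (hmono : MonotoneOn t (Set.Iio k)) {P : List ℕ} {m : ℕ} (hk : P.sum + m + 1 ≤ k)
    (hlen : P.sum + m + 1 + (P.length + 1) ≤ n)
    (IH : ∀ mu : List ℕ, mu.sum = P.sum + m → mu.sum + mu.length ≤ n →
      (jmProd n (jmIndex hn t) (P.sum + m)).coeff (canonicalPerm n hn mu) =
        if SegmentCond mu t then 1 else 0) :
    (jmProd n (jmIndex hn t) (P.sum + m + 1)).coeff (canonicalPerm n hn (P ++ [m + 1])) =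
      if SegmentCond (P ++ [m + 1]) t then 1 else 0 := by
  set A := P.sum + P.length
  set i := jmIndex hn t (P.sum + m)
  have hi : (i : ℕ) = t (P.sum + m) - 1 := jmIndex_val hn (ht _ (by omega))
  have hsum : P.sum + m + 1 = (P ++ [m + 1]).sum := by simp; omega
  rw [jmProd_succ, coeff_mul_JM]
  rcases lt_trichotomy (t (P.sum + m)) (A + m + 2) with hlt | heq | hgt
  · rw [if_neg fun h => by have := segmentCond_append_succ_last h; omega]
    refine Finset.sum_eq_zero fun s hs => coeff_jmProd_canonicalPerm_mul_swap_eq_zero_of_lt hn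
      (by omega) (fun p hp => ?_) (by omega) (Finset.mem_filter.1 hs).2
    have := hmono (by simp; omega) (by simp; omega) hp.le
    rw [Fin.le_def, jmIndex_val hn (ht p (by omega))]
    omega
  · have hiv : (i : ℕ) = A + m + 1 := by omega
    rw [sum_filter_lt_eq_ite_exists hiv (p := fun u => SegmentCond (P ++ [u, m - u]) t)]
    · refine if_congr ?_ rfl rfl
      simp only [segmentCond_append_pair, segmentCond_append_succ_iff hmono (by omega) heq]
      exact ⟨fun ⟨u, hu, hP, hs⟩ => ⟨hP, u, hu, hs⟩, fun ⟨hP, u, hu, hs⟩ => ⟨u, hu, hP, hs⟩⟩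
    · exact fun u v hu hv hsu hsv => splitsAt_unique hmono (by omega) hu hv
        (segmentCond_append_pair.1 hsu).2 (segmentCond_append_pair.1 hsv).2
    · -- the cycles of `σ_{P ++ [m+1]}` lying below `A` never meet `i`
      refine fun s hsA => coeff_jmProd_canonicalPerm_mul_swap_eq_zero hn hsum (by simp; omega) ?_
      exact Equiv.Perm.not_sameCycle_of_mapsTo
        (canonicalPerm_append_singleton_mapsTo hn (by omega)) hsA (by simp; omega)
    · intro s hsA hsi
      rw [Fin.lt_def, hiv] at hsi
      rw [canonicalPerm_append_mul_swap hn (u := s - A) (by omega) (by omega) (by omega) hiv]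
      exact IH _ (by simp; omega) (by simp; omega)
  · -- `σ_{P ++ [m+1]}` fixes the point `i`, so `s` and `i` lie in different cycles
    rw [if_neg fun h => by have := segmentCond_append_succ_last h; omega]
    refine Finset.sum_eq_zero fun s hs => coeff_jmProd_canonicalPerm_mul_swap_eq_zero hn hsum
      (by simp; omega) fun h => (Finset.mem_filter.1 hs).2.ne (h.eq_of_right ?_)
    exact canonicalPerm_apply_of_le hn (by simp; omega) (by simp; omega)

theorem coeff_jmProd_canonicalPerm (ht : ∀ p < k, t p ≤ n) (hmono : MonotoneOn t (Set.Iio k))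
    {mu : List ℕ} (hk : mu.sum ≤ k) (hlen : mu.sum + mu.length ≤ n) :
    (jmProd n (jmIndex hn t) mu.sum).coeff (canonicalPerm n hn mu) =
      if SegmentCond mu t then 1 else 0 := by
  induction hK : mu.sum using Nat.strong_induction_on generalizing mu with
  | _ K IH =>
  induction mu using List.reverseRecOn generalizing K with
  | nil =>
    subst hK
    simp [canonicalPerm, canonicalPermAux, jmProd_zero, segmentCond_nil]
  | append_singleton P m ihP =>
    simp only [List.sum_append, List.sum_singleton, List.length_append,
      List.length_singleton] at hK hk hlen
    cases m with
    | zero =>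
      rw [canonicalPerm_append_zero, ihP K IH (by omega) (by omega) hK]
      simp [segmentCond_append_singleton, epred_zero]
    | succ m =>
      subst hK
      exact coeff_jmProd_canonicalPerm_append_succ hn ht hmono hk (by omega)
        fun mu hmu hlen' => IH (P.sum + m) (by omega) (by omega) hlen' hmu

end Coefficient

theorem coefficient_JM_product_general (n k : ℕ) (hn : 0 < n)
    (mu : List ℕ) (hk : mu.sum = k) (hwt : k + mu.length ≤ n)
    (t : ℕ → ℕ) (ht : ∀ p < k, 2 ≤ t p ∧ t p ≤ n)
    (htm : ∀ p q : ℕ, p ≤ q → q < k → t p ≤ t q) :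
    (((List.range k).map
        (fun p => JM n (⟨(t p - 1) % n, Nat.mod_lt _ hn⟩ : Fin n))).prod).coeff
      (canonicalPerm n hn mu) =
    if ∀ i : Fin mu.length,
        Epred ((mu.take i).sum + i + 1) (mu.get i)
          (fun q : Fin (mu.get i) => t ((mu.take i).sum + q))
      then 1 else 0 := by
  subst hk
  -- the two `if`s differ only in their `Decidable` instances
  exact (coeff_jmProd_canonicalPerm hn (fun p hp => (ht p hp).2)
    (fun p hp q hq hpq => htm p q hpq hq) le_rfl hwt).trans (if_congr Iff.rfl rfl rfl)

/-- For a partition `μ` of `k` with length `l` and `n ≥ k + l`, given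
`2 ≤ t_1 ≤ ⋯ ≤ t_k ≤ n` (here `t` is indexed from `0`, i.e. `t 0, …, t (k-1)` are
`t_1, …, t_k`), the coefficient of `σ_μ` in `J_{t_1} ⋯ J_{t_k}` equals `1` if each
consecutive segment of `t` of length `μ_i` belongs to `𝔈(μ_1+⋯+μ_{i−1}+i ; μ_i)`,
and equals `0` otherwise. -/
theorem coefficient_JM_product (n k : ℕ) (hn : 0 < n)
    (mu : List ℕ) (hmu : ∀ x ∈ mu, 0 < x) (hsort : mu.Pairwise (· ≥ ·))
    (hk : mu.sum = k) (hwt : k + mu.length ≤ n)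
    (t : ℕ → ℕ) (ht : ∀ p < k, 2 ≤ t p ∧ t p ≤ n)
    (htm : ∀ p q : ℕ, p ≤ q → q < k → t p ≤ t q) :
    (((List.range k).map
        (fun p => JM n (⟨(t p - 1) % n, Nat.mod_lt _ hn⟩ : Fin n))).prod).coeff
      (canonicalPerm n hn mu) =
    if ∀ i : Fin mu.length,
        Epred ((mu.take i).sum + i + 1) (mu.get i)
          (fun q : Fin (mu.get i) => t ((mu.take i).sum + q))
      then 1 else 0 :=
  coefficient_JM_product_general n k hn mu hk hwt t ht htm
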